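/- Let G₂ be the bowtie graph on 5 vertices consisting of two triangles sharing exactly one common vertex, let D be any orientation of G₂, and let a ≥ 1 be a real number. Then R⁰_{a+1}(D) ≤ 2·4^a + 2^{a+1} + 2. -/

import Mathlib

/-- An orientation of a simple graph `G`: each edge `{u,v}` is replaced by exactly one
of the arcs `(u,v)` or `(v,u)`. -/
structure SimpleGraph.Orientation {V : Type*} (G : SimpleGraph V) where
  /-- the arc relation of the orientation -/
  arc : V → V → Prop
  adj_of_arc : ∀ u v, arc u v → G.Adj u v
  arc_total : ∀ u v, G.Adj u v → arc u v ∨ arc v u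
  arc_asymm : ∀ u v, arc u v → ¬ arc v u

namespace SimpleGraph.Orientation

variable {V : Type*} {G : SimpleGraph V} (D : G.Orientation)

/-- The out-degree of a vertex in the orientation. -/
noncomputable def outDeg (u : V) : ℕ := Set.ncard {v | D.arc u v}

/-- The in-degree of a vertex in the orientation. -/
noncomputable def inDeg (v : V) : ℕ := Set.ncard {u | D.arc u v}

/-- An orientation is sink-source if every vertex has out-degree 0 or in-degree 0. -/
def IsSinkSource : Prop := ∀ v : V, D.outDeg v = 0 ∨ D.inDeg v = 0

open scoped Classical in
/-- The zeroth-order general Randić index `R⁰_{a+1}(D)` of an orientation: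
`(1/2) ∑_{(u,v) arc} ((d⁺ u)^a + (d⁻ v)^a)`. -/
noncomputable def randic [Fintype V] (a : ℝ) : ℝ :=
  (1 / 2) * ∑ p ∈ Finset.univ.filter (fun p : V × V => D.arc p.1 p.2),
    ((D.outDeg p.1 : ℝ) ^ a + (D.inDeg p.2 : ℝ) ^ a)

end SimpleGraph.Orientation

/-!
Summing over arcs, `2 R⁰_{a+1}(D) = ∑_v (d⁺(v)^(a+1) + d⁻(v)^(a+1))`, and `x ↦ x^(a+1)` is
superadditive, so a vertex of degree `n` contributes at most `n^(a+1)`. If the centre `2` is a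
source or a sink it contributes `4^(a+1)`, and each triangle through it is transitive, so one of
its two other vertices has in- and out-degree `1` and contributes only `2`. Otherwise the centre
contributes at most `1 + 3^(a+1)` or `2 · 2^(a+1)`, which is small enough because
`3^a ≤ (3/4) 4^a` for `a ≥ 1`.
-/

theorem mul_rpow_add_mul_rpow_le {x y a : ℝ} (hx : 0 ≤ x) (hy : 0 ≤ y) (ha : 0 ≤ a) :
    x * x ^ a + y * y ^ a ≤ (x + y) * (x + y) ^ a := by
  calc x * x ^ a + y * y ^ a ≤ x * (x + y) ^ a + y * (x + y) ^ a := by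
        gcongr
        · exact le_add_of_nonneg_right hy
        · exact le_add_of_nonneg_left hx
    _ = (x + y) * (x + y) ^ a := by ring

theorem three_rpow_le {a : ℝ} (ha : 1 ≤ a) : (3 : ℝ) ^ a ≤ 3 / 4 * 4 ^ a := by
  have h : (3 / 4 : ℝ) ^ a ≤ 3 / 4 :=
    Real.rpow_le_self_of_le_one (by norm_num) (by norm_num) ha
  calc (3 : ℝ) ^ a = (3 / 4) ^ a * 4 ^ a := by
        rw [← Real.mul_rpow (by norm_num) (by norm_num)]; norm_num
    _ ≤ 3 / 4 * 4 ^ a := by gcongr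

namespace SimpleGraph.Orientation

variable {V : Type*} {G : SimpleGraph V} (D : G.Orientation)

theorem outDeg_add_inDeg [Finite V] (v : V) :
    D.outDeg v + D.inDeg v = (G.neighborSet v).ncard := by
  have hdisj : Disjoint {w | D.arc v w} {w | D.arc w v} :=
    Set.disjoint_left.2 fun w hvw hwv => D.arc_asymm v w hvw hwv
  rw [outDeg, inDeg, ← Set.ncard_union_eq hdisj]
  congr 1
  ext w
  exact ⟨fun h => h.elim (D.adj_of_arc v w) (fun h => (D.adj_of_arc w v h).symm),
    D.arc_total v w⟩

variable {D}

theorem outDeg_pos [Finite V] {u v : V} (h : D.arc u v) : 0 < D.outDeg u :=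
  (Set.ncard_pos).2 ⟨v, h⟩

theorem inDeg_pos [Finite V] {u v : V} (h : D.arc u v) : 0 < D.inDeg v :=
  (Set.ncard_pos).2 ⟨u, h⟩

theorem arc_of_inDeg_eq_zero [Finite V] {u v : V} (huv : G.Adj u v) (hu : D.inDeg u = 0) :
    D.arc u v :=
  (D.arc_total u v huv).resolve_right fun h => (inDeg_pos h).ne' hu

theorem arc_of_outDeg_eq_zero [Finite V] {u v : V} (huv : G.Adj u v) (hu : D.outDeg u = 0) :
    D.arc v u :=
  (D.arc_total v u huv.symm).resolve_right fun h => (outDeg_pos h).ne' hu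

theorem exists_outDeg_pos_inDeg_pos_of_triangle [Finite V] {u v w : V} (huv : G.Adj u v)
    (hwu : G.Adj w u) (hwv : G.Adj w v) (hw : D.outDeg w = 0 ∨ D.inDeg w = 0) :
    (0 < D.outDeg u ∧ 0 < D.inDeg u) ∨ (0 < D.outDeg v ∧ 0 < D.inDeg v) := by
  rcases hw with hw | hw
  · have hu := arc_of_outDeg_eq_zero hwu hw
    have hv := arc_of_outDeg_eq_zero hwv hw
    rcases D.arc_total u v huv with h | h
    · exact .inr ⟨outDeg_pos hv, inDeg_pos h⟩
    · exact .inl ⟨outDeg_pos hu, inDeg_pos h⟩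
  · have hu := arc_of_inDeg_eq_zero hwu hw
    have hv := arc_of_inDeg_eq_zero hwv hw
    rcases D.arc_total u v huv with h | h
    · exact .inl ⟨outDeg_pos h, inDeg_pos hu⟩
    · exact .inr ⟨outDeg_pos h, inDeg_pos hv⟩

variable (D)

open scoped Classical in
theorem outDeg_eq_card [Fintype V] (u : V) :
    D.outDeg u = (Finset.univ.filter (D.arc u)).card := by
  rw [outDeg, ← Set.ncard_coe_finset, Finset.coe_filter_univ]

open scoped Classical in
theorem inDeg_eq_card [Fintype V] (v : V) :
    D.inDeg v = (Finset.univ.filter (D.arc · v)).card := by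
  rw [inDeg, ← Set.ncard_coe_finset, Finset.coe_filter_univ]

open scoped Classical in
theorem sum_arcs_fst [Fintype V] (g : V → ℝ) :
    ∑ p ∈ Finset.univ.filter (fun p : V × V => D.arc p.1 p.2), g p.1 =
      ∑ u, D.outDeg u * g u := by
  rw [Finset.sum_filter, ← Finset.univ_product_univ, Finset.sum_product]
  refine Finset.sum_congr rfl fun u _ => ?_
  simp only [← Finset.sum_filter, Finset.sum_const, nsmul_eq_mul, outDeg_eq_card]

open scoped Classical in
theorem sum_arcs_snd [Fintype V] (g : V → ℝ) :
    ∑ p ∈ Finset.univ.filter (fun p : V × V => D.arc p.1 p.2), g p.2 =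
      ∑ v, D.inDeg v * g v := by
  rw [Finset.sum_filter, ← Finset.univ_product_univ, Finset.sum_product_right]
  refine Finset.sum_congr rfl fun v _ => ?_
  simp only [← Finset.sum_filter, Finset.sum_const, nsmul_eq_mul, inDeg_eq_card]

/-- `d⁺(v) ^ (a + 1) + d⁻(v) ^ (a + 1)`, with `x ^ (a + 1)` written as `x * x ^ a` so that it
vanishes at `x = 0` for every `a`. -/
noncomputable def degPowSum (a : ℝ) (v : V) : ℝ :=
  (D.outDeg v : ℝ) * (D.outDeg v : ℝ) ^ a + (D.inDeg v : ℝ) * (D.inDeg v : ℝ) ^ a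

theorem randic_eq_sum [Fintype V] (a : ℝ) : D.randic a = (1 / 2) * ∑ v, D.degPowSum a v := by
  rw [randic, Finset.sum_add_distrib, sum_arcs_fst D fun u => (D.outDeg u : ℝ) ^ a,
    sum_arcs_snd D fun v => (D.inDeg v : ℝ) ^ a, ← Finset.sum_add_distrib]
  rfl

variable {D}

theorem degPowSum_le {a : ℝ} (ha : 0 ≤ a) {v : V} {n : ℕ} (hv : D.outDeg v + D.inDeg v = n) :
    D.degPowSum a v ≤ n * (n : ℝ) ^ a := by
  have hn : (D.outDeg v : ℝ) + D.inDeg v = n := by exact_mod_cast hv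
  rw [degPowSum, ← hn]
  exact mul_rpow_add_mul_rpow_le (Nat.cast_nonneg _) (Nat.cast_nonneg _) ha

theorem degPowSum_eq_of_eq_zero {a : ℝ} {v : V} {n : ℕ} (hv : D.outDeg v + D.inDeg v = n)
    (h : D.outDeg v = 0 ∨ D.inDeg v = 0) : D.degPowSum a v = n * (n : ℝ) ^ a := by
  rcases h with h | h <;> simp [degPowSum, h, ← hv]

theorem degPowSum_eq_two {a : ℝ} {v : V} (hv : D.outDeg v + D.inDeg v = 2)
    (hout : 0 < D.outDeg v) (hin : 0 < D.inDeg v) : D.degPowSum a v = 2 := by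
  obtain ⟨h₁, h₂⟩ : D.outDeg v = 1 ∧ D.inDeg v = 1 := by omega
  simp only [degPowSum, h₁, h₂]
  norm_num

theorem degPowSum_add_le_of_add_eq_four {a : ℝ} (ha : 1 ≤ a) {v : V}
    (hv : D.outDeg v + D.inDeg v = 4) (hout : 0 < D.outDeg v) (hin : 0 < D.inDeg v) :
    D.degPowSum a v + 4 * (2 : ℝ) ^ a ≤ 4 * (4 : ℝ) ^ a + 4 := by
  have h4 : (4 : ℝ) ^ a = (2 ^ a) ^ 2 := by
    rw [← Real.rpow_natCast, ← Real.rpow_mul two_pos.le, mul_comm, Real.rpow_mul two_pos.le]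
    norm_num
  have h3 := three_rpow_le ha
  obtain h | h | h : (D.outDeg v = 1 ∧ D.inDeg v = 3) ∨ (D.outDeg v = 2 ∧ D.inDeg v = 2) ∨
      (D.outDeg v = 3 ∧ D.inDeg v = 1) := by omega
  -- with `t = 2 ^ a`, the split `1 + 3` needs `7 t² / 4 - 4 t + 3 = ((7 t - 8)² + 20) / 28 ≥ 0`
  all_goals
    simp only [degPowSum, h.1, h.2, Nat.cast_one, Real.one_rpow]
    push_cast
    nlinarith [sq_nonneg (7 * (2 : ℝ) ^ a - 8), sq_nonneg ((2 : ℝ) ^ a - 1)]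

end SimpleGraph.Orientation

theorem ncard_neighborSet_bowtie {G : SimpleGraph (Fin 5)}
    (hG : ∀ x y : Fin 5, G.Adj x y ↔
      (s(x, y) = s((0 : Fin 5), 1) ∨ s(x, y) = s((0 : Fin 5), 2) ∨
       s(x, y) = s((1 : Fin 5), 2) ∨ s(x, y) = s((2 : Fin 5), 3) ∨
       s(x, y) = s((2 : Fin 5), 4) ∨ s(x, y) = s((3 : Fin 5), 4))) (v : Fin 5) :
    (G.neighborSet v).ncard = if v = 2 then 4 else 2 := by
  rw [show G.neighborSet v = {w | _} from Set.ext (hG v), Set.ncard_eq_toFinset_card']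
  fin_cases v <;> decide

/-- for the bowtie graph on 5 vertices (two triangles `{0,1,2}` and
`{2,3,4}` sharing the vertex `2`), every orientation `D` satisfies
`R⁰_{a+1}(D) ≤ 2·4^a + 2^(a+1) + 2` for all real `a ≥ 1`. -/
theorem bowtie_orientation_randic_le (G : SimpleGraph (Fin 5))
    (hG : ∀ x y : Fin 5, G.Adj x y ↔
      (s(x, y) = s((0 : Fin 5), 1) ∨ s(x, y) = s((0 : Fin 5), 2) ∨
       s(x, y) = s((1 : Fin 5), 2) ∨ s(x, y) = s((2 : Fin 5), 3) ∨
       s(x, y) = s((2 : Fin 5), 4) ∨ s(x, y) = s((3 : Fin 5), 4)))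
    (D : G.Orientation) (a : ℝ) (ha : 1 ≤ a) :
    D.randic a ≤ 2 * (4 : ℝ) ^ a + (2 : ℝ) ^ (a + 1) + 2 := by
  have hdeg (v : Fin 5) : D.outDeg v + D.inDeg v = if v = 2 then 4 else 2 :=
    (D.outDeg_add_inDeg v).trans (ncard_neighborSet_bowtie hG v)
  have hside (v : Fin 5) (hv : v ≠ 2) : D.outDeg v + D.inDeg v = 2 := by simpa [hv] using hdeg v
  have hside_le (v : Fin 5) (hv : v ≠ 2) : D.degPowSum a v ≤ 2 * 2 ^ a := by
    exact_mod_cast D.degPowSum_le (by linarith) (hside v hv)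
  rw [D.randic_eq_sum, Fin.sum_univ_five, Real.rpow_add_one two_ne_zero]
  by_cases hc : D.outDeg 2 = 0 ∨ D.inDeg 2 = 0
  · have hcenter : D.degPowSum a 2 = 4 * 4 ^ a := by
      exact_mod_cast D.degPowSum_eq_of_eq_zero (hdeg 2) hc
    have htriangle (u v : Fin 5) (hu : u ≠ 2) (hv : v ≠ 2) (huv : G.Adj u v) (h2u : G.Adj 2 u)
        (h2v : G.Adj 2 v) : D.degPowSum a u + D.degPowSum a v ≤ 2 * 2 ^ a + 2 := by
      rcases D.exists_outDeg_pos_inDeg_pos_of_triangle huv h2u h2v hc with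
        ⟨hout, hin⟩ | ⟨hout, hin⟩
      · linarith [D.degPowSum_eq_two (a := a) (hside u hu) hout hin, hside_le v hv]
      · linarith [D.degPowSum_eq_two (a := a) (hside v hv) hout hin, hside_le u hu]
    have h01 := htriangle 0 1 (by decide) (by decide) ((hG _ _).2 (by decide))
      ((hG _ _).2 (by decide)) ((hG _ _).2 (by decide))
    have h34 := htriangle 3 4 (by decide) (by decide) ((hG _ _).2 (by decide))
      ((hG _ _).2 (by decide)) ((hG _ _).2 (by decide))
    linarith
  · obtain ⟨hout, hin⟩ := not_or.1 hc
    have hcenter := D.degPowSum_add_le_of_add_eq_four ha (hdeg 2)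
      (Nat.pos_of_ne_zero hout) (Nat.pos_of_ne_zero hin)
    linarith [hside_le 0 (by decide), hside_le 1 (by decide), hside_le 3 (by decide),
      hside_le 4 (by decide)]
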